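/- In a regular conversion C (the closure of the empty relation, C = ∅*), two units are convertible if and only if they are root equivalent, and coherent if and only if they are numerically equivalent: u ∝_C v ↔ root u = root v, and u ≅_C v ↔ eval u = eval v. -/
import Mathlib


open Finsupp

/-- The positive rationals, as a multiplicative group. -/
abbrev Ratio : Type := {q : ℚ // 0 < q}

/-- Prefixes: the free abelian group over base prefixes `P`. -/
abbrev PrefG (P : Type*) : Type _ := P →₀ ℤ
/-- Root units: the free abelian group over base units `B`. -/
abbrev RootG (B : Type*) : Type _ := B →₀ ℤ
/-- Units: the free abelian group over preunits (prefix, base unit). -/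
abbrev UnitG (P B : Type*) : Type _ := ((P →₀ ℤ) × B) →₀ ℤ

variable {P B D : Type*}

/-- The root of a unit: forget all prefixes. -/
noncomputable def rootU (u : UnitG P B) : RootG B :=
  Finsupp.mapDomain Prod.snd u

/-- Embed a root unit back into the units, with empty prefixes. -/
noncomputable def unrootU (f : RootG B) : UnitG P B :=
  Finsupp.mapDomain (fun b => ((0 : PrefG P), b)) f

/-- Strip all prefixes from a unit. -/
noncomputable def stripU (u : UnitG P B) : UnitG P B := unrootU (rootU u)

/-- The value of a prefix, given values of base prefixes. -/
noncomputable def valP (val₀ : P → Ratio) (f : PrefG P) : Ratio :=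
  ∏ p ∈ f.support, val₀ p ^ (f p)

/-- The prefix value of a unit. -/
noncomputable def pvalU (val₀ : P → Ratio) (g : UnitG P B) : Ratio :=
  ∏ x ∈ g.support, valP val₀ x.1 ^ (g x)

/-- The dimension of a root unit, given dimensions of base units. -/
noncomputable def dimRoot (dim₀ : B → D →₀ ℤ) (f : RootG B) : D →₀ ℤ :=
  ∑ b ∈ f.support, f b • dim₀ b

/-- The dimension of a unit. -/
noncomputable def dimU (dim₀ : B → D →₀ ℤ) (u : UnitG P B) : D →₀ ℤ :=
  dimRoot dim₀ (rootU u)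

/-- The combined prefix of a unit. -/
noncomputable def prefU (u : UnitG P B) : PrefG P :=
  ∑ x ∈ u.support, u x • x.1

/-- Normalization of a unit. -/
noncomputable def normU (u : UnitG P B) : PrefG P × RootG B :=
  (prefU u, rootU u)

/-- Evaluation of a unit. -/
noncomputable def evalU (val₀ : P → Ratio) (u : UnitG P B) : Ratio × RootG B :=
  (pvalU val₀ u, rootU u)

/-- A unit conversion: dimensionally consistent and functional in the ratio. -/
def IsConversion (dim₀ : B → D →₀ ℤ) (C : Set (UnitG P B × Ratio × UnitG P B)) : Prop :=
  (∀ u r v, (u, r, v) ∈ C → dimU dim₀ u = dimU dim₀ v) ∧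
  (∀ u r r' v, (u, r, v) ∈ C → (u, r', v) ∈ C → r = r')

/-- The closure rules for unit conversions. -/
inductive ClosureRel {P B : Type*} (val₀ : P → Ratio)
    (C : Set (UnitG P B × Ratio × UnitG P B)) :
    UnitG P B → Ratio → UnitG P B → Prop
  | base {u r v} : (u, r, v) ∈ C → ClosureRel val₀ C u r v
  | mul {u r v u' r' v'} : ClosureRel val₀ C u r v → ClosureRel val₀ C u' r' v' →
      ClosureRel val₀ C (u + u') (r * r') (v + v')
  | inv {u r v} : ClosureRel val₀ C u r v → ClosureRel val₀ C (-u) r⁻¹ (-v)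
  | pe (u : UnitG P B) : ClosureRel val₀ C u (pvalU val₀ u) (stripU u)
  | pe' (u : UnitG P B) : ClosureRel val₀ C (stripU u) (pvalU val₀ u)⁻¹ u

/-- The conversion closure: the smallest relation containing `C` closed under the rules. -/
def convClosure (val₀ : P → Ratio) (C : Set (UnitG P B × Ratio × UnitG P B)) :
    Set (UnitG P B × Ratio × UnitG P B) :=
  {t | ClosureRel val₀ C t.1 t.2.1 t.2.2}

/-- Convertibility with respect to a conversion. -/
def Convertible (C : Set (UnitG P B × Ratio × UnitG P B)) (u v : UnitG P B) : Prop :=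
  ∃ r, (u, r, v) ∈ C

/-- Coherence with respect to a conversion. -/
def Coherent (C : Set (UnitG P B × Ratio × UnitG P B)) (u v : UnitG P B) : Prop :=
  (u, (1 : Ratio), v) ∈ C

/-- The unit `δu₀` corresponding to a base unit. -/
noncomputable def deltaB (P : Type*) {B : Type*} (u₀ : B) : UnitG P B :=
  Finsupp.single ((0 : PrefG P), u₀) 1

/-- A defining conversion: basic and functional in its first component. -/
def IsDefining (C : Set (UnitG P B × Ratio × UnitG P B)) : Prop :=
  (∀ u r v, (u, r, v) ∈ C → ∃ u₀ : B, u = deltaB P u₀) ∧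
  (∀ u r v r' v', (u, r, v) ∈ C → (u, r', v') ∈ C → v = v')

/-- One-step dependency between base units. -/
def Depends (C : Set (UnitG P B × Ratio × UnitG P B)) (u₀ v₀ : B) : Prop :=
  ∃ r v, (deltaB P u₀, r, v) ∈ C ∧ v₀ ∈ (rootU v).support

/-- The dependency order `>_C`. -/
def DepOrd (C : Set (UnitG P B × Ratio × UnitG P B)) : B → B → Prop :=
  Relation.TransGen (Depends C)

/-- The domain of a defining conversion. -/
def domC (C : Set (UnitG P B × Ratio × UnitG P B)) : Set B :=
  {u₀ : B | ∃ r v, (deltaB P u₀, r, v) ∈ C}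


/-- Definition expansion. -/
noncomputable def xpd (C : Set (UnitG P B × Ratio × UnitG P B)) (u₀ : B) :
    Ratio × UnitG P B :=
  haveI := Classical.propDecidable (∃ rv : Ratio × UnitG P B, (deltaB P u₀, rv.1, rv.2) ∈ C)
  if h : ∃ rv : Ratio × UnitG P B, (deltaB P u₀, rv.1, rv.2) ∈ C then h.choose
  else (1, deltaB P u₀)

/-- The base rewriting map. -/
noncomputable def rwrB (val₀ : P → Ratio) (C : Set (UnitG P B × Ratio × UnitG P B))
    (u₀ : B) : Ratio × RootG B :=
  ((xpd C u₀).1 * pvalU val₀ (xpd C u₀).2, rootU (xpd C u₀).2)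

/-- One rewriting step on evaluated units. -/
noncomputable def rwrStep (val₀ : P → Ratio) (C : Set (UnitG P B × Ratio × UnitG P B)) :
    Ratio × RootG B → Ratio × RootG B :=
  fun p => (p.1 * ∏ b ∈ p.2.support, (rwrB val₀ C b).1 ^ (p.2 b),
            ∑ b ∈ p.2.support, p.2 b • (rwrB val₀ C b).2)


section Aux

variable (val₀ : P → Ratio)

lemma rootU_add (u v : UnitG P B) : rootU (u + v) = rootU u + rootU v :=
  Finsupp.mapDomain_add

lemma rootU_neg (u : UnitG P B) : rootU (-u) = - rootU u :=
  map_neg (Finsupp.mapDomain.addMonoidHom Prod.snd) u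

lemma rootU_unrootU (f : RootG B) : rootU (unrootU (P := P) f) = f := by
  unfold rootU unrootU
  rw [← Finsupp.mapDomain_comp]
  exact Finsupp.mapDomain_id

lemma rootU_stripU (u : UnitG P B) : rootU (stripU u) = rootU u :=
  rootU_unrootU _

lemma stripU_eq (u v : UnitG P B) (h : rootU u = rootU v) : stripU u = stripU v := by
  unfold stripU; rw [h]

lemma ratio_zpow_add (a : Ratio) (m n : ℤ) : a ^ (m + n) = a ^ m * a ^ n :=
  Subtype.ext (zpow_add₀ (ne_of_gt a.2) m n)

lemma ratio_zpow_zero (a : Ratio) : a ^ (0 : ℤ) = 1 :=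
  Subtype.ext (zpow_zero _)

lemma ratio_one_zpow (n : ℤ) : (1 : Ratio) ^ n = 1 :=
  Subtype.ext (one_zpow n)

lemma pvalU_eq_prod (g : UnitG P B) :
    pvalU val₀ g = g.prod fun x n => valP val₀ x.1 ^ n := rfl

lemma pvalU_add (u v : UnitG P B) :
    pvalU val₀ (u + v) = pvalU val₀ u * pvalU val₀ v := by
  simp only [pvalU_eq_prod]
  exact Finsupp.prod_add_index' (fun x => ratio_zpow_zero _) (fun x m n => ratio_zpow_add _ m n)

lemma pvalU_zero : pvalU val₀ (0 : UnitG P B) = 1 := by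
  simp [pvalU]

lemma pvalU_neg (u : UnitG P B) : pvalU val₀ (-u) = (pvalU val₀ u)⁻¹ := by
  have h := pvalU_add val₀ u (-u)
  rw [add_neg_cancel, pvalU_zero] at h
  exact eq_inv_of_mul_eq_one_right h.symm

lemma valP_zero : valP val₀ (0 : PrefG P) = 1 := by
  simp [valP]

lemma pvalU_stripU (u : UnitG P B) : pvalU val₀ (stripU u) = 1 := by
  unfold stripU unrootU
  rw [pvalU_eq_prod,
    Finsupp.prod_mapDomain_index_inj (f := fun b => ((0 : PrefG P), b))
      (fun a b hab => by simpa using hab)]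
  simp only [valP_zero, ratio_one_zpow]
  exact Finset.prod_const_one

lemma stripU_stripU (u : UnitG P B) : stripU (stripU u) = stripU u := by
  unfold stripU
  rw [rootU_unrootU]

lemma closure_invariant {u v : UnitG P B} {r : Ratio}
    (h : ClosureRel val₀ (∅ : Set (UnitG P B × Ratio × UnitG P B)) u r v) :
    rootU u = rootU v ∧ r * pvalU val₀ v = pvalU val₀ u := by
  induction h with
  | base h => exact absurd h (Set.notMem_empty _)
  | mul h1 h2 ih1 ih2 =>
      refine ⟨by rw [rootU_add, rootU_add, ih1.1, ih2.1], ?_⟩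
      rw [pvalU_add, pvalU_add, ← ih1.2, ← ih2.2, mul_mul_mul_comm]
  | inv h ih =>
      refine ⟨by rw [rootU_neg, rootU_neg, ih.1], ?_⟩
      rw [pvalU_neg, pvalU_neg, ← mul_inv, ih.2]
  | pe u => exact ⟨(rootU_stripU u).symm, by rw [pvalU_stripU, mul_one]⟩
  | pe' u => exact ⟨rootU_stripU u, by rw [pvalU_stripU]; exact inv_mul_cancel _⟩

lemma closure_of_root {u v : UnitG P B} (h : rootU u = rootU v) :
    ClosureRel val₀ (∅ : Set (UnitG P B × Ratio × UnitG P B)) u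
      (pvalU val₀ u * (pvalU val₀ v)⁻¹) v := by
  have h1 := ClosureRel.pe (val₀ := val₀)
    (C := (∅ : Set (UnitG P B × Ratio × UnitG P B))) u
  have h2 := ClosureRel.pe' (val₀ := val₀)
    (C := (∅ : Set (UnitG P B × Ratio × UnitG P B))) v
  rw [stripU_eq u v h] at h1
  have h3 := ClosureRel.pe (val₀ := val₀)
    (C := (∅ : Set (UnitG P B × Ratio × UnitG P B))) (stripU v)
  rw [pvalU_stripU, stripU_stripU] at h3
  have h4 := ClosureRel.inv h3
  have h5 := ClosureRel.mul (ClosureRel.mul h1 h2) h4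
  have e1 : u + stripU v + -(stripU v) = u := by abel
  have e2 : v + -(stripU v) + stripU v = v := by abel
  have e3 : pvalU val₀ u * (pvalU val₀ v)⁻¹ * (1 : Ratio)⁻¹
      = pvalU val₀ u * (pvalU val₀ v)⁻¹ := by rw [inv_one, mul_one]
  rw [e1, e3] at h5
  have e4 : stripU v + v + -(stripU v) = v := by abel
  rwa [e4] at h5

end Aux

/-- In a regular conversion, units are convertible iff root equivalent, and coherent
iff numerically equivalent. -/
theorem regular_conv_iff {P B : Type*} (val₀ : P → Ratio)
    (C : Set (UnitG P B × Ratio × UnitG P B))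
    (hreg : C = convClosure val₀ (∅ : Set (UnitG P B × Ratio × UnitG P B)))
    (u v : UnitG P B) :
    (Convertible C u v ↔ rootU u = rootU v) ∧
    (Coherent C u v ↔ evalU val₀ u = evalU val₀ v) := by
  have hmem : ∀ u r v, (u, r, v) ∈ C ↔
      ClosureRel val₀ (∅ : Set (UnitG P B × Ratio × UnitG P B)) u r v := by
    intro u r v; rw [hreg]; exact Iff.rfl
  constructor
  · constructor
    · rintro ⟨r, hr⟩
      exact (closure_invariant val₀ ((hmem u r v).1 hr)).1
    · intro h
      exact ⟨_, (hmem u _ v).2 (closure_of_root val₀ h)⟩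
  · constructor
    · intro h
      have h' := closure_invariant val₀ ((hmem u 1 v).1 h)
      have : pvalU val₀ u = pvalU val₀ v := by
        rw [← h'.2, one_mul]
      exact Prod.ext this h'.1
    · intro h
      have h1 : pvalU val₀ u = pvalU val₀ v := congrArg Prod.fst h
      have h2 : rootU u = rootU v := congrArg Prod.snd h
      have := closure_of_root val₀ h2
      rw [h1, mul_inv_cancel] at this
      exact (hmem u 1 v).2 this
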